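/- arXiv:1203.3264 — 3 statements merged into one kernel-verified Lean document; each statement's English description precedes it below -/
import Mathlib

section
/- For every non-negative integer n ≥ 1, the number of up-down lattice paths of length 2n starting at (0,0) that never return to height 0 equals binom(2n, n). -/
/-!
A path that never returns to height `0` stays strictly on one side of the axis, so by the symmetry
`up ↔ down` it suffices to count the positive ones; these are an up step followed by a path of
length `2n - 1` that never goes below `0`.

A path of length `m` that never goes below `0` has at least `m / 2` up steps. Counting such paths
with at least `j` up steps, for `m ≤ 2j`, the last step gives Pascal's rule (a down step is always
allowed, since the path ends above `0`), so there are `C(m, j)` of them. For `m = 2n - 1`, `j = n`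
this gives `C(2n - 1, n)` positive paths, and `2 C(2n - 1, n) = C(2n, n)`.
-/

/-- An up-down lattice path, encoded as a `List Bool` with `true` = up step
`(1,1)` and `false` = down step `(1,-1)`. -/
abbrev UDPath := List Bool

/-- No lattice point of the path other than the starting point has height
`0`: every nonempty prefix has unequal numbers of up and down steps. -/
def NeverReturns (w : UDPath) : Prop :=
  ∀ t, 0 < t → t ≤ w.length →
    (w.take t).count true ≠ (w.take t).count false

open Set

def StaysNonneg (w : UDPath) : Prop :=
  ∀ t, (w.take t).count false ≤ (w.take t).count true

def StaysPositive (w : UDPath) : Prop :=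
  ∀ t, 0 < t → (w.take t).count false < (w.take t).count true

theorem StaysNonneg.length_le_two_mul_count {w : UDPath} (h : StaysNonneg w) :
    w.length ≤ 2 * w.count true := by
  have := h w.length
  rw [List.take_length] at this
  have := List.count_true_add_count_false w
  omega

theorem staysNonneg_append_singleton (v : UDPath) (b : Bool) :
    StaysNonneg (v ++ [b]) ↔ StaysNonneg v ∧ (b = false → v.count false < v.count true) := by
  have hlast := List.count_true_add_count_false v
  constructor
  · intro h
    refine ⟨fun t => ?_, ?_⟩
    · rcases le_or_gt t v.length with ht | ht
      · simpa [List.take_append_of_le_length ht] using h t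
      · simpa [List.take_of_length_le ht.le,
          List.take_append_of_le_length le_rfl] using h v.length
    · rintro rfl
      have := h (v ++ [false]).length
      rw [List.take_length] at this
      simp [List.count_append] at this
      omega
  · rintro ⟨hv, hb⟩ t
    rcases le_or_gt t v.length with ht | ht
    · simpa [List.take_append_of_le_length ht] using hv t
    · rw [List.take_of_length_le (by simp; omega)]
      have := hv.length_le_two_mul_count
      cases b
      · simpa [List.count_append] using hb rfl
      · simp [List.count_append]
        omega

theorem staysPositive_cons (b : Bool) (v : UDPath) :
    StaysPositive (b :: v) ↔ b = true ∧ StaysNonneg v := by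
  constructor
  · intro h
    have hb : b = true := by
      have := h 1 one_pos
      cases b <;> simp_all
    subst hb
    refine ⟨rfl, fun t => ?_⟩
    simpa [List.take_succ_cons, List.count_cons, Nat.lt_succ_iff] using h (t + 1) t.succ_pos
  · rintro ⟨rfl, hv⟩ t ht
    obtain ⟨t, rfl⟩ := Nat.exists_eq_add_of_lt ht
    simpa [List.take_succ_cons, List.count_cons, Nat.lt_succ_iff] using hv t

theorem neverReturns_map_not {w : UDPath} (h : NeverReturns w) :
    NeverReturns (w.map not) := by
  intro t ht hle
  rw [← List.map_take]
  have hcount (b : Bool) : ((w.take t).map not).count b = (w.take t).count (!b) := by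
    simpa using List.count_map_of_injective (w.take t) not Bool.not_injective (!b)
  rw [hcount, hcount]
  exact (h t ht (by simpa using hle)).symm

theorem NeverReturns.staysPositive {v : UDPath} (h : NeverReturns (true :: v)) :
    StaysPositive (true :: v) := by
  intro t ht
  induction t with
  | zero => omega
  | succ t ih =>
    rcases Nat.eq_zero_or_pos t with rfl | htpos
    · simp
    have hprev := ih htpos
    rcases le_or_gt (true :: v).length t with hlen | hlen
    · rwa [List.take_of_length_le (hlen.trans t.le_succ), ← List.take_of_length_le hlen]
    -- one more step moves the height by one, and it cannot pass through zero
    have hne := h (t + 1) t.succ_pos hlen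
    rw [List.take_add_one] at hne ⊢
    rcases hstep : (true :: v)[t]? with _ | b
    · simpa [hstep] using hprev
    · cases b <;> simp [hstep, List.count_append] at hne ⊢ <;> omega

theorem neverReturns_map_not_iff {w : UDPath} :
    NeverReturns (w.map not) ↔ NeverReturns w :=
  ⟨fun h => by simpa [Function.comp_def] using neverReturns_map_not h, neverReturns_map_not⟩

theorem StaysPositive.neverReturns {w : UDPath} (h : StaysPositive w) : NeverReturns w :=
  fun t ht _ => (h t ht).ne'

theorem neverReturns_iff {w : UDPath} (hw : w ≠ []) :
    NeverReturns w ↔ StaysPositive w ∨ StaysPositive (w.map not) := by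
  obtain ⟨b, v, rfl⟩ := List.exists_cons_of_ne_nil hw
  constructor
  · intro h
    cases b
    · exact Or.inr (neverReturns_map_not h).staysPositive
    · exact Or.inl h.staysPositive
  · rintro (hp | hp)
    · exact hp.neverReturns
    · exact neverReturns_map_not_iff.1 hp.neverReturns

def nonnegPaths (m j : ℕ) : Set UDPath :=
  {w | w.length = m ∧ StaysNonneg w ∧ j ≤ w.count true}

instance (m j : ℕ) : Finite (nonnegPaths m j) :=
  (List.finite_length_eq Bool m).subset fun _ hw => hw.1

theorem nonnegPaths_eq_nonnegPaths_zero {m j : ℕ} (h : 2 * j ≤ m + 1) :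
    nonnegPaths m j = nonnegPaths m 0 := by
  ext w
  simp only [nonnegPaths, mem_ofPred_eq, zero_le, and_true, and_congr_right_iff,
    and_iff_left_iff_imp]
  rintro rfl hw
  have := hw.length_le_two_mul_count
  omega

theorem nonnegPaths_succ_succ {m j : ℕ} (h : m ≤ 2 * j + 1) :
    nonnegPaths (m + 1) (j + 1) =
      (· ++ [true]) '' nonnegPaths m j ∪ (· ++ [false]) '' nonnegPaths m (j + 1) := by
  ext w
  constructor
  · rintro ⟨hlen, hw, hj⟩
    obtain ⟨v, b, rfl⟩ : ∃ v b, w = v ++ [b] :=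
      ⟨w.dropLast, w.getLast (List.ne_nil_of_length_eq_add_one hlen),
        (List.dropLast_append_getLast _).symm⟩
    rw [staysNonneg_append_singleton] at hw
    simp only [List.length_append, List.length_singleton, add_left_inj] at hlen
    cases b
    · refine Or.inr ⟨v, ⟨hlen, hw.1, ?_⟩, rfl⟩
      simpa [List.count_append] using hj
    · refine Or.inl ⟨v, ⟨hlen, hw.1, ?_⟩, rfl⟩
      simpa [List.count_append] using hj
  · rintro (⟨v, ⟨rfl, hv, hj⟩, rfl⟩ | ⟨v, ⟨rfl, hv, hj⟩, rfl⟩)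
    · refine ⟨by simp, (staysNonneg_append_singleton v true).2 ⟨hv, nofun⟩, ?_⟩
      simpa [List.count_append] using hj
    · -- a path with at least `j + 1 > m / 2` up steps ends strictly above zero
      refine ⟨by simp, (staysNonneg_append_singleton v false).2 ⟨hv, fun _ => ?_⟩, ?_⟩
      · have := List.count_true_add_count_false v
        omega
      · simpa [List.count_append] using hj

theorem ncard_nonnegPaths_succ_succ {m j : ℕ} (h : m ≤ 2 * j + 1) :
    (nonnegPaths (m + 1) (j + 1)).ncard =
      (nonnegPaths m j).ncard + (nonnegPaths m (j + 1)).ncard := by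
  rw [nonnegPaths_succ_succ h, ncard_union_eq,
    ncard_image_of_injective _ (List.append_left_injective _),
    ncard_image_of_injective _ (List.append_left_injective _)]
  rw [Set.disjoint_left]
  rintro _ ⟨u, -, rfl⟩ ⟨v, -, huv⟩
  simpa using congrArg List.getLast? huv

theorem ncard_nonnegPaths {m j : ℕ} (h : m ≤ 2 * j) : (nonnegPaths m j).ncard = m.choose j := by
  induction m generalizing j with
  | zero =>
    rcases j with _ | j
    · have : nonnegPaths 0 0 = {[]} := by
        ext w; simp +contextual [nonnegPaths, StaysNonneg]
      simp [this]
    · have : nonnegPaths 0 (j + 1) = ∅ := by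
        ext w; simp +contextual [nonnegPaths]
      simp [this]
  | succ m ih =>
    obtain ⟨j, rfl⟩ : ∃ i, j = i + 1 := ⟨j - 1, by omega⟩
    rw [ncard_nonnegPaths_succ_succ (by omega), Nat.choose_succ_succ,
      ih (j := j + 1) (by omega)]
    congr 1
    rcases (show m ≤ 2 * j ∨ m = 2 * j + 1 by omega) with hm | rfl
    · exact ih hm
    · -- in odd length `2j + 1`, having `j` up steps forces having `j + 1`
      rw [nonnegPaths_eq_nonnegPaths_zero (by omega),
        ← nonnegPaths_eq_nonnegPaths_zero (j := j + 1) (by omega), ih (by omega),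
        Nat.choose_symm_half]

theorem ncard_nonnegPaths_zero (m : ℕ) : (nonnegPaths m 0).ncard = m.choose ((m + 1) / 2) := by
  rw [← nonnegPaths_eq_nonnegPaths_zero (j := (m + 1) / 2) (by omega),
    ncard_nonnegPaths (by omega)]

def positivePaths (m : ℕ) : Set UDPath :=
  {w | w.length = m ∧ StaysPositive w}

instance (m : ℕ) : Finite (positivePaths m) :=
  (List.finite_length_eq Bool m).subset fun _ hw => hw.1

theorem positivePaths_succ (m : ℕ) :
    positivePaths (m + 1) = List.cons true '' nonnegPaths m 0 := by
  ext w
  constructor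
  · rintro ⟨hlen, hw⟩
    obtain ⟨b, v, rfl⟩ := List.exists_cons_of_length_eq_add_one hlen
    obtain ⟨rfl, hv⟩ := (staysPositive_cons b v).1 hw
    exact ⟨v, ⟨by simpa using hlen, hv, Nat.zero_le _⟩, rfl⟩
  · rintro ⟨v, ⟨rfl, hv, -⟩, rfl⟩
    exact ⟨rfl, (staysPositive_cons true v).2 ⟨rfl, hv⟩⟩

theorem ncard_positivePaths_succ (m : ℕ) :
    (positivePaths (m + 1)).ncard = m.choose ((m + 1) / 2) := by
  rw [positivePaths_succ, ncard_image_of_injective _ List.cons_injective, ncard_nonnegPaths_zero]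

theorem setOf_neverReturns_eq_union (m : ℕ) :
    {w : UDPath | w.length = m + 1 ∧ NeverReturns w} =
      positivePaths (m + 1) ∪ List.map not '' positivePaths (m + 1) := by
  ext w
  constructor
  · rintro ⟨hlen, hw⟩
    rcases (neverReturns_iff (List.ne_nil_of_length_eq_add_one hlen)).1 hw with hp | hp
    · exact Or.inl ⟨hlen, hp⟩
    · exact Or.inr ⟨w.map not, ⟨by simpa using hlen, hp⟩, by simp [Function.comp_def]⟩
  · rintro (⟨hlen, hp⟩ | ⟨v, ⟨hlen, hp⟩, rfl⟩)
    · exact ⟨hlen, hp.neverReturns⟩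
    · exact ⟨by simpa using hlen, neverReturns_map_not hp.neverReturns⟩

theorem disjoint_positivePaths_map_not (m : ℕ) :
    Disjoint (positivePaths m) (List.map not '' positivePaths m) := by
  rw [Set.disjoint_left]
  rintro _ ⟨-, hw⟩ ⟨v, ⟨-, hv⟩, rfl⟩
  have := hw 1 one_pos
  have := hv 1 one_pos
  cases v with
  | nil => simp_all
  | cons b v => cases b <;> simp_all

theorem never_return_count (n : ℕ) (hn : 1 ≤ n) :
    Nat.card {w : UDPath // w.length = 2 * n ∧ NeverReturns w} =
      Nat.choose (2 * n) n := by
  obtain ⟨k, rfl⟩ := Nat.exists_eq_add_of_le' hn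
  calc Nat.card {w : UDPath // w.length = 2 * (k + 1) ∧ NeverReturns w}
      = (positivePaths (2 * k + 1 + 1) ∪
          List.map not '' positivePaths (2 * k + 1 + 1)).ncard := by
        rw [← setOf_neverReturns_eq_union]; rfl
    _ = 2 * (2 * k + 1).choose (k + 1) := by
        rw [ncard_union_eq (disjoint_positivePaths_map_not _),
          ncard_image_of_injective _ (List.map_injective_iff.2 Bool.not_injective),
          ncard_positivePaths_succ, show (2 * k + 1 + 1) / 2 = k + 1 by omega]
        ring
    _ = (2 * (k + 1)).choose (k + 1) := by
        rw [show 2 * (k + 1) = 2 * k + 1 + 1 by ring, Nat.choose_succ_succ' (2 * k + 1) k,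
          Nat.choose_symm_half]
        ring
end

section
/- For every n ≥ 0, the number of words of length 2n over the alphabet {U, D} in which every nonempty prefix contains a different number of U's and D's equals binom(2n, n). -/
/-!
Since the balance of a prefix changes by one with each letter, a nonempty word none of whose
nonempty prefixes is balanced is dominated by some letter `a` (necessarily its first): every
nonempty prefix contains more copies of `a` than of `!a`. Splitting off the last letter shows that
the number of words of length `m + 1` dominated by `a` with at most `k` copies of `!a` satisfies
Pascal's recurrence while `2k ≤ m`, hence equals `C(m, k)`. A dominated word of length `2n` has
fewer than `n` copies of `!a`, so the count is `2 C(2n - 1, n - 1) = C(2n, n)`.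
-/

/-- Words over `{U, D}` encoded as `List Bool`, `true` = U, `false` = D. -/
abbrev UDWord := List Bool

/-- Every nonempty prefix contains different numbers of U's and D's. -/
def AllPrefixesUnbalanced (w : UDWord) : Prop :=
  ∀ t, 0 < t → t ≤ w.length →
    (w.take t).count true ≠ (w.take t).count false

instance {α : Type*} [Finite α] (m : ℕ) (P : List α → Prop) :
    Finite {w : List α // w.length = m ∧ P w} :=
  ((List.finite_length_eq α m).subset fun _ hw => hw.1).to_subtype

theorem card_length_eq_zero {α : Type*} {P : List α → Prop} (h : P []) :
    Nat.card {w : List α // w.length = 0 ∧ P w} = 1 :=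
  Nat.card_eq_one_iff_exists.2
    ⟨⟨[], rfl, h⟩, fun w => Subtype.ext (List.length_eq_zero_iff.1 w.2.1)⟩

theorem card_length_eq_succ {α : Type*} [Fintype α] (Q : List α → Prop) (m : ℕ) :
    Nat.card {w : List α // w.length = m + 1 ∧ Q w} =
      ∑ b, Nat.card {w : List α // w.length = m ∧ Q (w ++ [b])} := by
  rw [← Nat.card_sigma]
  refine Nat.card_congr
    { toFun := fun w => ⟨w.1.getLast (List.ne_nil_of_length_eq_add_one w.2.1), w.1.dropLast,
        by simp [w.2.1], by rw [List.dropLast_append_getLast]; exact w.2.2⟩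
      invFun := fun x => ⟨x.2.1 ++ [x.1], by simp [x.2.2.1], x.2.2.2⟩
      left_inv := fun w => Subtype.ext (List.dropLast_append_getLast _)
      right_inv := fun x => Sigma.subtype_ext List.getLast_concat List.dropLast_concat }

def Dominates (a : Bool) (w : List Bool) : Prop :=
  ∀ p, p <+: w → p ≠ [] → p.count (!a) < p.count a

namespace Dominates

variable {a : Bool} {w : List Bool}

theorem nil (a : Bool) : Dominates a [] := fun _ hp hne => absurd (List.prefix_nil.1 hp) hne

theorem concat_iff {b : Bool} :
    Dominates a (w ++ [b]) ↔ Dominates a w ∧ (w ++ [b]).count (!a) < (w ++ [b]).count a := by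
  simp only [Dominates, List.prefix_concat_iff]
  constructor
  · intro h
    exact ⟨fun p hp => h p (Or.inr hp), h _ (Or.inl rfl) (by simp)⟩
  · rintro ⟨h, hlast⟩ p (rfl | hp) hne
    exacts [hlast, h p hp hne]

theorem concat_self_iff (h : w.count (!a) ≤ w.count a) :
    Dominates a (w ++ [a]) ↔ Dominates a w := by
  rw [concat_iff, and_iff_left]
  simpa using Nat.lt_succ_of_le h

theorem concat_not_iff :
    Dominates a (w ++ [!a]) ↔ Dominates a w ∧ w.count (!a) + 1 < w.count a := by
  simp [concat_iff]

theorem two_mul_count_lt (h : Dominates a w) (hw : w ≠ []) : 2 * w.count (!a) < w.length := by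
  have := h w (List.prefix_refl w) hw
  have := List.count_not_add_count w a
  omega

theorem unique {b : Bool} (ha : Dominates a w) (hb : Dominates b w) (hw : w ≠ []) :
    a = b := by
  have hab := ha w (List.prefix_refl w) hw
  rcases Bool.eq_or_eq_not b a with rfl | rfl
  · rfl
  · have hba := hb w (List.prefix_refl w) hw
    rw [Bool.not_not] at hba
    omega

end Dominates

theorem allPrefixesUnbalanced_iff {w : List Bool} :
    AllPrefixesUnbalanced w ↔ ∀ p, p <+: w → p ≠ [] → p.count true ≠ p.count false := by
  constructor
  · intro h p hp hne
    rw [List.prefix_iff_eq_take.1 hp]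
    exact h _ (List.length_pos_iff.2 hne) hp.length_le
  · intro h t ht htw
    refine h _ (List.take_prefix t w) ?_
    rw [Ne, List.take_eq_nil_iff, not_or]
    exact ⟨ht.ne', List.ne_nil_of_length_pos (ht.trans_le htw)⟩

theorem Dominates.allPrefixesUnbalanced {a : Bool} {w : List Bool} (h : Dominates a w) :
    AllPrefixesUnbalanced w := by
  refine allPrefixesUnbalanced_iff.2 fun p hp hne => ?_
  have := h p hp hne
  cases a
  exacts [this.ne, this.ne']

theorem exists_dominates_of_allPrefixesUnbalanced {w : List Bool} (hw : w ≠ [])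
    (h : AllPrefixesUnbalanced w) : ∃ a, Dominates a w := by
  rw [allPrefixesUnbalanced_iff] at h
  induction w using List.reverseRecOn with
  | nil => exact absurd rfl hw
  | append_singleton w b ih =>
    by_cases hw' : w = []
    · subst hw'
      exact ⟨b, (Dominates.concat_self_iff (by simp)).2 (Dominates.nil b)⟩
    obtain ⟨a, ha⟩ := ih hw' fun p hp => h p (hp.trans (List.prefix_append _ _))
    have hprev := ha w (List.prefix_refl w) hw'
    rcases Bool.eq_or_eq_not b a with rfl | rfl
    · exact ⟨b, (Dominates.concat_self_iff hprev.le).2 ha⟩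
    · have hlast : (w ++ [!a]).count (!a) ≠ (w ++ [!a]).count a := by
        have := h _ (List.prefix_refl _) hw
        cases a
        exacts [this, this.symm]
      have : w.count (!a) + 1 ≠ w.count a := by simpa using hlast
      exact ⟨a, Dominates.concat_not_iff.2 ⟨ha, by omega⟩⟩

noncomputable def ballotCount (a : Bool) (m k : ℕ) : ℕ :=
  Nat.card {w : List Bool // w.length = m ∧ Dominates a w ∧ w.count (!a) ≤ k}

section ballotCount

variable {a : Bool} {m k : ℕ}

theorem ballotCount_succ (h : 2 * k ≤ m) :
    ballotCount a (m + 1) k = ballotCount a m k +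
      Nat.card {w : List Bool // w.length = m ∧ Dominates a w ∧ w.count (!a) + 1 ≤ k} := by
  have append_self (w : List Bool) (hw : w.length = m) :
      Dominates a (w ++ [a]) ∧ (w ++ [a]).count (!a) ≤ k ↔
        Dominates a w ∧ w.count (!a) ≤ k := by
    have := List.count_not_add_count w a
    have hcount : (w ++ [a]).count (!a) = w.count (!a) := by simp
    rw [hcount]
    exact and_congr_left fun _ => Dominates.concat_self_iff (by omega)
  have append_not (w : List Bool) (hw : w.length = m) :
      Dominates a (w ++ [!a]) ∧ (w ++ [!a]).count (!a) ≤ k ↔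
        Dominates a w ∧ w.count (!a) + 1 ≤ k := by
    have := List.count_not_add_count w a
    have hcount : (w ++ [!a]).count (!a) = w.count (!a) + 1 := by simp
    rw [hcount, Dominates.concat_not_iff, and_assoc]
    exact and_congr_right fun _ => and_iff_right_of_imp fun _ => by omega
  have hself := Nat.card_congr (Equiv.subtypeEquivRight fun w =>
    and_congr_right fun hw => append_self w hw)
  have hnot := Nat.card_congr (Equiv.subtypeEquivRight fun w =>
    and_congr_right fun hw => append_not w hw)
  rw [ballotCount, card_length_eq_succ, Fintype.sum_bool]
  cases a
  · rw [add_comm]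
    exact congrArg₂ (· + ·) hself hnot
  · exact congrArg₂ (· + ·) hself hnot

theorem ballotCount_eq_card_of_le (h : m ≤ 2 * k + 2) :
    ballotCount a m k = Nat.card {w : List Bool // w.length = m ∧ Dominates a w} := by
  refine Nat.card_congr (Equiv.subtypeEquivRight fun w => ?_)
  refine and_congr_right fun hw => and_iff_left_of_imp fun hd => ?_
  rcases eq_or_ne w [] with rfl | hne
  · simp
  · have := hd.two_mul_count_lt hne
    omega

theorem ballotCount_succ_eq_choose (h : 2 * k ≤ m) : ballotCount a (m + 1) k = m.choose k := by
  induction m generalizing k with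
  | zero =>
    obtain rfl : k = 0 := by omega
    rw [ballotCount_succ h, ballotCount, card_length_eq_zero ⟨Dominates.nil a, le_rfl⟩]
    simp
  | succ m ih =>
    rw [ballotCount_succ h]
    cases k with
    | zero => simpa using ih (k := 0) (Nat.zero_le _)
    | succ k =>
      simp only [Nat.add_le_add_iff_right]
      rw [← ballotCount, ih (k := k) (by omega), Nat.choose_succ_succ', add_comm]
      rcases (by omega : 2 * (k + 1) ≤ m ∨ m = 2 * k + 1) with hm | rfl
      · rw [ih hm]
      · -- a dominated word of length `2 * k + 2` has at most `k` letters `!a`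
        rw [ballotCount_eq_card_of_le (by omega), ← ballotCount_eq_card_of_le (k := k) (by omega),
          ih (k := k) (by omega), Nat.choose_symm_half]

end ballotCount

theorem card_dominates_length_two_mul_add_two (a : Bool) (n : ℕ) :
    Nat.card {w : List Bool // w.length = 2 * (n + 1) ∧ Dominates a w} =
      (2 * n + 1).choose n := by
  rw [← ballotCount_eq_card_of_le (k := n) (by omega), show 2 * (n + 1) = 2 * n + 1 + 1 by ring]
  exact ballotCount_succ_eq_choose (by omega)

theorem card_allPrefixesUnbalanced_eq_sum {m : ℕ} (hm : m ≠ 0) :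
    Nat.card {w : UDWord // w.length = m ∧ AllPrefixesUnbalanced w} =
      ∑ a, Nat.card {w : List Bool // w.length = m ∧ Dominates a w} := by
  have ne_nil {w : List Bool} (hw : w.length = m) : w ≠ [] :=
    List.ne_nil_of_length_pos (by omega)
  rw [← Nat.card_sigma]
  refine (Nat.card_congr (Equiv.ofBijective
    (fun x => ⟨x.2.1, x.2.2.1, x.2.2.2.allPrefixesUnbalanced⟩) ⟨?_, ?_⟩)).symm
  · rintro ⟨a, w, hw, ha⟩ ⟨b, v, _, hb⟩ h
    obtain rfl : w = v := congrArg Subtype.val h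
    exact Sigma.subtype_ext (ha.unique hb (ne_nil hw)) rfl
  · rintro ⟨w, hw, h⟩
    obtain ⟨a, ha⟩ := exists_dominates_of_allPrefixesUnbalanced (ne_nil hw) h
    exact ⟨⟨a, w, hw, ha⟩, rfl⟩

theorem unbalanced_prefix_count (n : ℕ) :
    Nat.card {w : UDWord // w.length = 2 * n ∧ AllPrefixesUnbalanced w} =
      Nat.choose (2 * n) n := by
  cases n with
  | zero => exact card_length_eq_zero fun t ht htw => absurd htw (by simpa using ht.ne')
  | succ n =>
    rw [card_allPrefixesUnbalanced_eq_sum (by omega), Fintype.sum_bool,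
      card_dominates_length_two_mul_add_two, card_dominates_length_two_mul_add_two,
      show 2 * (n + 1) = 2 * n + 1 + 1 by ring, Nat.choose_succ_succ', Nat.choose_symm_half]
end

section
/- For every n ≥ 1, sum_{i+j+k=n} binom(2i,i)binom(2j,j)binom(2k,k) - sum_{i+j=n} binom(2i,i)binom(2j,j) = 2 * (number of pairs (H,X) where H is a balanced up-down path of length 2n and X is a lattice point of H of strictly positive height). -/
/-- The path is balanced: equally many up and down steps. -/
def IsBalanced (w : UDPath) : Prop := w.count true = w.count false

/-- The lattice point reached after `t` steps has strictly positive height. -/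
def AboveAt (w : UDPath) (t : ℕ) : Prop :=
  (w.take t).count false < (w.take t).count true

open Finset Finset.Nat

namespace Nat

theorem two_mul_sum_antidiagonal_fst_mul_centralBinom_mul (n : ℕ) :
    2 * ∑ p ∈ antidiagonal n, p.1 * (centralBinom p.1 * centralBinom p.2) =
      n * ∑ p ∈ antidiagonal n, centralBinom p.1 * centralBinom p.2 := by
  conv_lhs => rw [two_mul]; enter [2]; rw [← sum_antidiagonal_swap]
  rw [← sum_add_distrib, mul_sum]
  refine sum_congr rfl fun p hp => ?_
  rw [← mem_antidiagonal.mp hp, Prod.fst_swap, Prod.snd_swap]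
  ring

theorem sum_antidiagonal_centralBinom_mul_centralBinom (n : ℕ) :
    ∑ p ∈ antidiagonal n, centralBinom p.1 * centralBinom p.2 = 4 ^ n := by
  induction n with
  | zero => simp
  | succ n ih =>
    -- With `S m = ∑ C(i) C(j)` and `T m = ∑ i C(i) C(j)`: symmetry gives `2 T m = m S m`, and
    -- `(i + 1) C(i + 1) = 2 (2i + 1) C(i)` gives `T (n + 1) = 2 (2 T n + S n)`.
    have hsucc : ∑ p ∈ antidiagonal (n + 1), p.1 * (centralBinom p.1 * centralBinom p.2) =
        2 * (2 * ∑ p ∈ antidiagonal n, p.1 * (centralBinom p.1 * centralBinom p.2) +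
          ∑ p ∈ antidiagonal n, centralBinom p.1 * centralBinom p.2) := by
      rw [sum_antidiagonal_succ, zero_mul, zero_add, mul_sum, ← sum_add_distrib, mul_sum]
      refine sum_congr rfl fun p _ => ?_
      calc (p.1 + 1) * (centralBinom (p.1 + 1) * centralBinom p.2)
          = (p.1 + 1) * centralBinom (p.1 + 1) * centralBinom p.2 := by ring
        _ = _ := by rw [succ_mul_centralBinom_succ]; ring
    have key := two_mul_sum_antidiagonal_fst_mul_centralBinom_mul (n + 1)
    rw [hsucc, two_mul_sum_antidiagonal_fst_mul_centralBinom_mul, ih] at key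
    apply Nat.eq_of_mul_eq_mul_left (n.add_one_pos)
    rw [← key]
    ring

theorem sum_antidiagonal_centralBinom_mul_four_pow (n : ℕ) :
    ∑ p ∈ antidiagonal n, centralBinom p.1 * 4 ^ p.2 = (2 * n + 1) * centralBinom n := by
  induction n with
  | zero => simp
  | succ n ih =>
    rw [sum_antidiagonal_succ', pow_zero, mul_one]
    simp only [pow_succ, ← mul_assoc, ← sum_mul]
    have h : (2 * n + 1) * centralBinom n * 4 = 2 * ((n + 1) * centralBinom (n + 1)) := by
      rw [succ_mul_centralBinom_succ]; ring
    rw [ih, h]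
    ring

end Nat

theorem sum_antidiagonal_two_mul {M : Type*} [AddCommMonoid M] (n : ℕ) (f : ℕ × ℕ → M)
    (hf : ∀ p, Odd p.1 → f p = 0) :
    ∑ p ∈ antidiagonal (2 * n), f p = ∑ p ∈ antidiagonal n, f (2 * p.1, 2 * p.2) := by
  have hinj : Set.InjOn (fun p : ℕ × ℕ => (2 * p.1, 2 * p.2)) (antidiagonal n) := by
    intro p _ q _ h
    simp only [Prod.mk.injEq] at h
    ext <;> omega
  rw [← sum_image hinj]
  refine (sum_subset (fun p hp => ?_) fun p hp hnot => hf p ?_).symm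
  · simp only [mem_image, HasAntidiagonal.mem_antidiagonal] at hp ⊢
    obtain ⟨q, hq, rfl⟩ := hp
    omega
  · rw [HasAntidiagonal.mem_antidiagonal] at hp
    refine Nat.not_even_iff_odd.mp fun ⟨i, hi⟩ => hnot (mem_image.mpr ⟨(i, n - i), ?_, ?_⟩)
    · rw [HasAntidiagonal.mem_antidiagonal]; omega
    · ext <;> simp <;> omega

instance (w : UDPath) : Decidable (IsBalanced w) := inferInstanceAs (Decidable (_ = _))

instance (w : UDPath) (t : ℕ) : Decidable (AboveAt w t) := inferInstanceAs (Decidable (_ < _))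

def boolLists : ℕ → Finset (List Bool)
  | 0 => {[]}
  | m + 1 => (boolLists m).map ⟨List.cons true, List.cons_injective⟩ ∪
      (boolLists m).map ⟨List.cons false, List.cons_injective⟩

@[simp]
theorem mem_boolLists {m : ℕ} {w : List Bool} : w ∈ boolLists m ↔ w.length = m := by
  induction m generalizing w with
  | zero => simp [boolLists]
  | succ m ih =>
    cases w with
    | nil => simp [boolLists]
    | cons b w => cases b <;> simp [boolLists, ih]

theorem card_filter_count_true_boolLists (m k : ℕ) :
    #{w ∈ boolLists m | w.count true = k} = m.choose k := by
  induction m generalizing k with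
  | zero => cases k <;> simp [boolLists, filter_singleton]
  | succ m ih =>
    have hdisj : Disjoint ((boolLists m).map ⟨List.cons true, List.cons_injective⟩)
        ((boolLists m).map ⟨List.cons false, List.cons_injective⟩) := by
      simp [disjoint_left]
    rw [boolLists, filter_union, card_union_of_disjoint (disjoint_filter_filter hdisj),
      filter_map, filter_map, card_map, card_map]
    cases k with
    | zero => simpa using ih 0
    | succ k => simp [ih, Nat.choose_succ_succ]

def balancedLists (m : ℕ) : Finset UDPath := {w ∈ boolLists m | IsBalanced w}

@[simp]
theorem mem_balancedLists {m : ℕ} {w : UDPath} :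
    w ∈ balancedLists m ↔ w.length = m ∧ IsBalanced w := by
  simp [balancedLists]

theorem card_balancedLists_two_mul (n : ℕ) : #(balancedLists (2 * n)) = n.centralBinom := by
  rw [Nat.centralBinom_eq_two_mul_choose, ← card_filter_count_true_boolLists, balancedLists]
  refine congrArg card (filter_congr fun w hw => ?_)
  have := w.count_true_add_count_false
  rw [mem_boolLists] at hw
  unfold IsBalanced
  omega

theorem IsBalanced.even_length {w : UDPath} (h : IsBalanced w) : Even w.length :=
  ⟨w.count true, by rw [← w.count_true_add_count_false, ← h]⟩

theorem List.count_map_not (w : List Bool) (b : Bool) : (w.map not).count b = w.count (!b) := by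
  simpa using w.count_map_of_injective not Bool.not_injective (!b)

@[simp]
theorem isBalanced_map_not {w : UDPath} : IsBalanced (w.map not) ↔ IsBalanced w := by
  simp only [IsBalanced, List.count_map_not, Bool.not_true, Bool.not_false, eq_comm]

theorem aboveAt_map_not {w : UDPath} {t : ℕ} :
    AboveAt (w.map not) t ↔ (w.take t).count true < (w.take t).count false := by
  simp only [AboveAt, ← List.map_take, List.count_map_not, Bool.not_true, Bool.not_false]

theorem isBalanced_append_iff_right {u v : UDPath} (hu : IsBalanced u) :
    IsBalanced (u ++ v) ↔ IsBalanced v := by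
  unfold IsBalanced at *
  simp only [List.count_append]
  omega

theorem card_filter_aboveAt_map_not (m t : ℕ) :
    #{w ∈ balancedLists m | AboveAt (w.map not) t} = #{w ∈ balancedLists m | AboveAt w t} := by
  refine card_nbij' (List.map not) (List.map not) ?_ ?_ ?_ ?_ <;> intro w <;>
    simp +contextual [Function.comp_def]

theorem card_filter_isBalanced_take {m t u : ℕ} (h : t + u = m) :
    #{w ∈ balancedLists m | IsBalanced (w.take t)} =
      #(balancedLists t) * #(balancedLists u) := by
  rw [← card_product]
  refine card_nbij' (fun w => (w.take t, w.drop t)) (fun p => p.1 ++ p.2) ?_ ?_ ?_ ?_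
  · intro w hw
    simp only [coe_filter, mem_balancedLists, Set.mem_ofPred_eq] at hw
    obtain ⟨⟨hlen, hbal⟩, htake⟩ := hw
    rw [← List.take_append_drop t w, isBalanced_append_iff_right htake] at hbal
    simp only [coe_product, Set.mem_prod, SetLike.mem_coe, mem_balancedLists, List.length_take,
      inf_eq_left, htake, and_true, List.length_drop, hbal]
    omega
  · rintro ⟨u, v⟩ huv
    simp only [coe_product, Set.mem_prod, mem_coe, mem_balancedLists] at huv
    obtain ⟨⟨hu, hbu⟩, hv, hbv⟩ := huv
    simp only [coe_filter, mem_balancedLists, Set.mem_ofPred_eq, List.length_append,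
      isBalanced_append_iff_right hbu, hbv, and_true, List.take_left' hu, hbu]
    omega
  · intro w _
    exact List.take_append_drop t w
  · rintro ⟨u, v⟩ huv
    simp only [coe_product, Set.mem_prod, mem_coe, mem_balancedLists] at huv
    simp [List.take_left' huv.1.1, List.drop_left' huv.1.1]

theorem card_balancedLists_trichotomy (m t : ℕ) :
    #(balancedLists m) = #{w ∈ balancedLists m | AboveAt w t} +
      #{w ∈ balancedLists m | AboveAt (w.map not) t} +
        #{w ∈ balancedLists m | IsBalanced (w.take t)} := by
  simp only [card_eq_sum_ones (balancedLists m), card_filter, ← sum_add_distrib]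
  refine sum_congr rfl fun w _ => ?_
  simp only [aboveAt_map_not]
  simp only [AboveAt, IsBalanced]
  grind

theorem card_balancedLists_eq_two_mul_add {m : ℕ} (p : ℕ × ℕ) (hp : p ∈ antidiagonal m) :
    #(balancedLists m) = 2 * #{w ∈ balancedLists m | AboveAt w p.1} +
      #(balancedLists p.1) * #(balancedLists p.2) := by
  rw [card_balancedLists_trichotomy m p.1, card_filter_aboveAt_map_not,
    card_filter_isBalanced_take (HasAntidiagonal.mem_antidiagonal.mp hp), two_mul]

theorem succ_mul_card_balancedLists (m : ℕ) :
    (m + 1) * #(balancedLists m) =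
      2 * ∑ p ∈ antidiagonal m, #{w ∈ balancedLists m | AboveAt w p.1} +
        ∑ p ∈ antidiagonal m, #(balancedLists p.1) * #(balancedLists p.2) := by
  rw [mul_sum, ← sum_add_distrib, ← Nat.card_antidiagonal m, ← smul_eq_mul, ← sum_const]
  exact sum_congr rfl card_balancedLists_eq_two_mul_add

theorem sum_antidiagonal_card_balancedLists_mul (n : ℕ) :
    ∑ p ∈ antidiagonal (2 * n), #(balancedLists p.1) * #(balancedLists p.2) = 4 ^ n := by
  rw [sum_antidiagonal_two_mul]
  · simp only [card_balancedLists_two_mul, Nat.sum_antidiagonal_centralBinom_mul_centralBinom]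
  · intro p hp
    rw [card_eq_zero.mpr, zero_mul]
    refine eq_empty_of_forall_notMem fun w hw => ?_
    rw [mem_balancedLists] at hw
    exact Nat.not_even_iff_odd.mpr hp (hw.1 ▸ hw.2.even_length)

def markedPoints (n : ℕ) : Finset (UDPath × ℕ) :=
  {q ∈ balancedLists (2 * n) ×ˢ range (2 * n + 1) | AboveAt q.1 q.2}

theorem mem_markedPoints {n : ℕ} {q : UDPath × ℕ} : q ∈ markedPoints n ↔
    q.1.length = 2 * n ∧ IsBalanced q.1 ∧ q.2 ≤ 2 * n ∧ AboveAt q.1 q.2 := by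
  simp only [markedPoints, mem_filter, mem_product, mem_balancedLists, mem_range,
    Nat.lt_succ_iff, and_assoc]

theorem card_markedPoints (n : ℕ) :
    #(markedPoints n) =
      ∑ p ∈ antidiagonal (2 * n), #{w ∈ balancedLists (2 * n) | AboveAt w p.1} := by
  rw [markedPoints, card_filter, sum_product_right, Nat.sum_antidiagonal_eq_sum_range_succ_mk]
  simp only [card_filter]

theorem off_axis_marked_count_general (n : ℕ) :
    (∑ p ∈ Finset.HasAntidiagonal.antidiagonal n, ∑ q ∈ Finset.HasAntidiagonal.antidiagonal p.2,
        Nat.choose (2 * p.1) p.1 * Nat.choose (2 * q.1) q.1 *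
          Nat.choose (2 * q.2) q.2) -
      (∑ p ∈ Finset.HasAntidiagonal.antidiagonal n,
        Nat.choose (2 * p.1) p.1 * Nat.choose (2 * p.2) p.2) =
    2 * Nat.card {q : UDPath × ℕ //
        q.1.length = 2 * n ∧ IsBalanced q.1 ∧ q.2 ≤ 2 * n ∧
          AboveAt q.1 q.2} := by
  simp only [← Nat.centralBinom_eq_two_mul_choose, mul_assoc, ← mul_sum,
    Nat.sum_antidiagonal_centralBinom_mul_centralBinom,
    Nat.sum_antidiagonal_centralBinom_mul_four_pow]
  have hcard : Nat.card {q : UDPath × ℕ // q.1.length = 2 * n ∧ IsBalanced q.1 ∧ q.2 ≤ 2 * n ∧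
      AboveAt q.1 q.2} = #(markedPoints n) := by
    rw [← Nat.card_eq_finsetCard]
    exact Nat.card_congr (Equiv.subtypeEquivRight fun q => mem_markedPoints.symm)
  have hcount := succ_mul_card_balancedLists (2 * n)
  rw [card_balancedLists_two_mul, sum_antidiagonal_card_balancedLists_mul,
    ← card_markedPoints] at hcount
  omega

theorem off_axis_marked_count (n : ℕ) (hn : 1 ≤ n) :
    (∑ p ∈ Finset.HasAntidiagonal.antidiagonal n, ∑ q ∈ Finset.HasAntidiagonal.antidiagonal p.2,
        Nat.choose (2 * p.1) p.1 * Nat.choose (2 * q.1) q.1 *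
          Nat.choose (2 * q.2) q.2) -
      (∑ p ∈ Finset.HasAntidiagonal.antidiagonal n,
        Nat.choose (2 * p.1) p.1 * Nat.choose (2 * p.2) p.2) =
    2 * Nat.card {q : UDPath × ℕ //
        q.1.length = 2 * n ∧ IsBalanced q.1 ∧ q.2 ≤ 2 * n ∧
          AboveAt q.1 q.2} :=
  off_axis_marked_count_general n
end
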